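/- Coverage lower bound via stepwise Hellinger: for autoregressive models π_D, π, any N ≥ 1 and δ ∈ (0,1), Pcov_N(π_D ‖ π) ≥ P_{(x,y)∼π_D}[ Σ_{h=1}^H H²(π_D(·|x,y_{1:h−1}), π(·|x,y_{1:h−1})) ≥ log(N/δ) ] − δ. -/
import Mathlib

open scoped BigOperators Classical

/-- The prefix `y_{1:h}` of a response `y : Fin H → V`, as a list. -/
def prefixOf {V : Type*} {H : ℕ} (y : Fin H → V) (h : ℕ) : List V :=
  (List.ofFn y).take h

/-- Sequence probability of an autoregressive model given by next-token
conditionals `p : X → List V → V → ℝ`. -/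
noncomputable def seqProb {X V : Type*} [Fintype V] {H : ℕ}
    (p : X → List V → V → ℝ) (x : X) (y : Fin H → V) : ℝ :=
  ∏ h : Fin H, p x (prefixOf y h) (y h)

/-- Per-step squared Hellinger distance between next-token conditionals. -/
noncomputable def stepHellingerSq {X V : Type*} [Fintype V]
    (p q : X → List V → V → ℝ) (x : X) (s : List V) : ℝ :=
  (1 / 2) * ∑ v, (Real.sqrt (p x s v) - Real.sqrt (q x s v)) ^ 2

lemma prefixOf_cons {V : Type*} {H : ℕ} (a : V) (z : Fin H → V) (h : ℕ) :
    prefixOf (Fin.cons a z : Fin (H + 1) → V) (h + 1) = a :: prefixOf z h := by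
  simp [prefixOf, List.ofFn_succ, Fin.cons_succ]

lemma prefixOf_zero {V : Type*} {H : ℕ} (y : Fin H → V) : prefixOf y 0 = [] := by
  simp [prefixOf]

lemma sqrt_prod' {ι : Type*} (s : Finset ι) (f : ι → ℝ) (hf : ∀ i ∈ s, 0 ≤ f i) :
    Real.sqrt (∏ i ∈ s, f i) = ∏ i ∈ s, Real.sqrt (f i) := by
  have h1 : (∏ i ∈ s, Real.sqrt (f i)) ^ 2 = ∏ i ∈ s, f i := by
    rw [← Finset.prod_pow]
    exact Finset.prod_congr rfl (fun i hi => Real.sq_sqrt (hf i hi))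
  rw [← h1, Real.sqrt_sq (Finset.prod_nonneg (fun i _ => Real.sqrt_nonneg _))]

/-- Chain-rule sum bound: if each conditional sums to at most one, the total mass is ≤ 1. -/
lemma chain_sum_le_one {V : Type*} [Fintype V] :
    ∀ (H : ℕ) (g : List V → V → ℝ), (∀ s v, 0 ≤ g s v) → (∀ s, ∑ v, g s v ≤ 1) →
    ∑ y : Fin H → V, ∏ h : Fin H, g (prefixOf y h) (y h) ≤ 1 := by
  intro H
  induction H with
  | zero => intro g h0 h1; simp
  | succ n ih =>
    intro g h0 h1
    have hEq := Fintype.sum_equiv (Fin.consEquiv (fun _ : Fin (n+1) => V)).symm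
      (fun y : Fin (n+1) → V => ∏ h : Fin (n+1), g (prefixOf y h) (y h))
      (fun p : V × (Fin n → V) => ∏ h : Fin (n+1),
        g (prefixOf (Fin.cons p.1 p.2 : Fin (n+1) → V) h) ((Fin.cons p.1 p.2 : Fin (n+1) → V) h))
      (by intro y; simp [Fin.consEquiv])
    rw [hEq, Fintype.sum_prod_type]
    have key : ∀ a : V, ∑ z : Fin n → V, ∏ h : Fin (n+1),
        g (prefixOf (Fin.cons a z : Fin (n+1) → V) h) ((Fin.cons a z : Fin (n+1) → V) h)
        ≤ g [] a := by
      intro a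
      have heq : ∀ z : Fin n → V, ∏ h : Fin (n+1),
          g (prefixOf (Fin.cons a z : Fin (n+1) → V) h) ((Fin.cons a z : Fin (n+1) → V) h)
          = g [] a * ∏ h : Fin n, g (a :: prefixOf z h) (z h) := by
        intro z
        rw [Fin.prod_univ_succ]
        congr 1
        exact Finset.prod_congr rfl (fun h _ => by
          simp [Fin.val_succ, prefixOf_cons])
      simp only [heq, ← Finset.mul_sum]
      have hle := ih (fun s v => g (a :: s) v) (fun s v => h0 _ _) (fun s => h1 _)
      calc g [] a * ∑ z : Fin n → V, ∏ h : Fin n, g (a :: prefixOf z h) (z h)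
          ≤ g [] a * 1 := mul_le_mul_of_nonneg_left hle (h0 _ _)
        _ = g [] a := mul_one _
    calc ∑ a : V, ∑ z : Fin n → V, ∏ h : Fin (n+1),
          g (prefixOf (Fin.cons a z : Fin (n+1) → V) h) ((Fin.cons a z : Fin (n+1) → V) h)
        ≤ ∑ a : V, g [] a := Finset.sum_le_sum (fun a _ => key a)
      _ ≤ 1 := h1 []

lemma hellinger_eq {X V : Type*} [Fintype V]
    (p q : X → List V → V → ℝ) (x : X) (s : List V)
    (hp0 : ∀ v, 0 ≤ p x s v) (hp1 : ∑ v, p x s v = 1)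
    (hq0 : ∀ v, 0 ≤ q x s v) (hq1 : ∑ v, q x s v = 1) :
    ∑ v, Real.sqrt (p x s v * q x s v) = 1 - stepHellingerSq p q x s := by
  have expand : ∀ v, (Real.sqrt (p x s v) - Real.sqrt (q x s v)) ^ 2
      = p x s v + q x s v - 2 * Real.sqrt (p x s v * q x s v) := by
    intro v
    rw [sub_sq, Real.sq_sqrt (hp0 v), Real.sq_sqrt (hq0 v), Real.sqrt_mul (hp0 v)]
    ring
  unfold stepHellingerSq
  rw [Finset.sum_congr rfl (fun v _ => expand v)]
  rw [Finset.sum_sub_distrib, Finset.sum_add_distrib, hp1, hq1, ← Finset.mul_sum]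
  ring

/-- Coverage lower bound via stepwise Hellinger distances: for any `N ≥ 1`, `δ ∈ (0,1)`,
`Pcov_N(π_D ‖ π) ≥ P_{π_D}[ Σ_h H²_h ≥ log(N/δ) ] − δ`. -/
theorem coverage_ge_stepwise_hellinger {X V : Type*} [Fintype X] [Fintype V] {H : ℕ}
    (μ : X → ℝ) (πD π : X → List V → V → ℝ)
    (hμ0 : ∀ x, 0 ≤ μ x) (hμ1 : ∑ x, μ x = 1)
    (hπD0 : ∀ x s v, 0 ≤ πD x s v) (hπD1 : ∀ x s, ∑ v, πD x s v = 1)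
    (hπ0 : ∀ x s v, 0 ≤ π x s v) (hπ1 : ∀ x s, ∑ v, π x s v = 1)
    (habs : ∀ x s v, 0 < πD x s v → 0 < π x s v)
    (N δ : ℝ) (hN : 1 ≤ N) (hδ0 : 0 < δ) (hδ1 : δ < 1) :
    (∑ x, ∑ y : Fin H → V, μ x * seqProb πD x y *
        (if N ≤ seqProb πD x y / seqProb π x y then 1 else 0)) ≥
      (∑ x, ∑ y : Fin H → V, μ x * seqProb πD x y *
        (if Real.log (N / δ) ≤
            ∑ h : Fin H, stepHellingerSq πD π x (prefixOf y h) then 1 else 0)) - δ := by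
  have hN0 : (0:ℝ) < N := lt_of_lt_of_le one_pos hN
  set g : X → List V → V → ℝ := fun x s v =>
    Real.sqrt (πD x s v * π x s v) * Real.exp (stepHellingerSq πD π x s) with hg
  have hg0 : ∀ x s v, 0 ≤ g x s v := fun x s v =>
    mul_nonneg (Real.sqrt_nonneg _) (Real.exp_pos _).le
  have hg1 : ∀ x s, ∑ v, g x s v ≤ 1 := by
    intro x s
    have heq : ∑ v, g x s v = (1 - stepHellingerSq πD π x s) *
        Real.exp (stepHellingerSq πD π x s) := by
      rw [hg]
      simp only
      rw [← Finset.sum_mul, hellinger_eq πD π x s (fun v => hπD0 x s v) (hπD1 x s)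
        (fun v => hπ0 x s v) (hπ1 x s)]
    rw [heq]
    set t := stepHellingerSq πD π x s
    have h1 : 1 - t ≤ Real.exp (-t) := by
      have := Real.add_one_le_exp (-t); linarith
    calc (1 - t) * Real.exp t ≤ Real.exp (-t) * Real.exp t :=
          mul_le_mul_of_nonneg_right h1 (Real.exp_pos _).le
      _ = 1 := by rw [← Real.exp_add]; simp
  set G : X → (Fin H → V) → ℝ := fun x y =>
    ∏ h : Fin H, g x (prefixOf y h) (y h) with hG
  have hG0 : ∀ x y, 0 ≤ G x y := fun x y =>
    Finset.prod_nonneg (fun h _ => hg0 _ _ _)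
  have hGsum : ∀ x, ∑ y : Fin H → V, G x y ≤ 1 := fun x =>
    chain_sum_le_one H (g x) (fun s v => hg0 x s v) (fun s => hg1 x s)
  have hGeq : ∀ x y, G x y = Real.sqrt (seqProb πD x y * seqProb π x y) *
      Real.exp (∑ h : Fin H, stepHellingerSq πD π x (prefixOf y h)) := by
    intro x y
    rw [hG]
    simp only [hg]
    rw [Finset.prod_mul_distrib, ← Real.exp_sum]
    congr 1
    rw [seqProb, seqProb, ← Finset.prod_mul_distrib]
    exact (sqrt_prod' _ _ (fun h _ => mul_nonneg (hπD0 _ _ _) (hπ0 _ _ _))).symm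
  have hpt : ∀ x y, μ x * seqProb πD x y *
      (if Real.log (N / δ) ≤ ∑ h : Fin H, stepHellingerSq πD π x (prefixOf y h) then 1 else 0)
      ≤ μ x * seqProb πD x y *
        (if N ≤ seqProb πD x y / seqProb π x y then 1 else 0) + δ * (μ x * G x y) := by
    intro x y
    set P := seqProb πD x y with hP
    set Q := seqProb π x y with hQ
    have hP0 : 0 ≤ P := Finset.prod_nonneg (fun h _ => hπD0 _ _ _)
    have hδG : 0 ≤ δ * (μ x * G x y) :=
      mul_nonneg hδ0.le (mul_nonneg (hμ0 x) (hG0 x y))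
    by_cases hB : N ≤ P / Q
    · simp only [hB, if_true]
      have h3 : μ x * P * (if Real.log (N / δ) ≤
          ∑ h : Fin H, stepHellingerSq πD π x (prefixOf y h) then (1:ℝ) else 0) ≤ μ x * P * 1 := by
        apply mul_le_mul_of_nonneg_left _ (mul_nonneg (hμ0 x) hP0)
        split <;> norm_num
      linarith
    · simp only [hB, if_false]
      by_cases hA : Real.log (N / δ) ≤ ∑ h : Fin H, stepHellingerSq πD π x (prefixOf y h)
      · simp only [hA, if_true]
        have hPG : P ≤ δ * G x y := by
          rcases eq_or_lt_of_le hP0 with h0 | hPpos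
          · rw [← h0]; exact mul_nonneg hδ0.le (hG0 x y)
          · have hQpos : 0 < Q := by
              apply Finset.prod_pos
              intro h _
              apply habs
              by_contra hc
              push_neg at hc
              have hz : πD x (prefixOf y h) (y h) = 0 :=
                le_antisymm hc (hπD0 _ _ _)
              have : P = 0 := Finset.prod_eq_zero (Finset.mem_univ h) hz
              exact absurd this (ne_of_gt hPpos)
            have hratio : P / Q < N := lt_of_not_ge hB
            have hPQ : P / N < Q := by
              rw [div_lt_iff₀ hN0]
              have h5 := (div_lt_iff₀ hQpos).1 hratio
              nlinarith
            have hsqrt : P / Real.sqrt N ≤ Real.sqrt (P * Q) := by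
              have h1 : P * (P / N) ≤ P * Q :=
                mul_le_mul_of_nonneg_left hPQ.le hP0
              have h2 : Real.sqrt (P * (P / N)) ≤ Real.sqrt (P * Q) :=
                Real.sqrt_le_sqrt h1
              have h3 : Real.sqrt (P * (P / N)) = P / Real.sqrt N := by
                rw [show P * (P / N) = P ^ 2 / N by ring,
                  Real.sqrt_div (sq_nonneg P), Real.sqrt_sq hP0]
              rw [← h3]; exact h2
            set E := Real.exp (∑ h : Fin H, stepHellingerSq πD π x (prefixOf y h)) with hE
            have hexp : N / δ ≤ E := by
              have h4 := Real.exp_le_exp.2 hA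
              rwa [Real.exp_log (div_pos hN0 hδ0)] at h4
            rw [hGeq x y, ← hP, ← hQ, ← hE]
            have hsqN : 1 ≤ Real.sqrt N := by
              rw [show (1:ℝ) = Real.sqrt 1 by simp]
              exact Real.sqrt_le_sqrt hN
            have hsqNpos : 0 < Real.sqrt N := lt_of_lt_of_le one_pos hsqN
            have hmm : (P / Real.sqrt N) * (N / δ) ≤ Real.sqrt (P * Q) * E :=
              mul_le_mul hsqrt hexp (le_of_lt (div_pos hN0 hδ0))
                (Real.sqrt_nonneg _)
            have hmm2 : δ * ((P / Real.sqrt N) * (N / δ)) ≤ δ * (Real.sqrt (P * Q) * E) :=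
              mul_le_mul_of_nonneg_left hmm hδ0.le
            have hval : δ * ((P / Real.sqrt N) * (N / δ)) = P * (N / Real.sqrt N) := by
              have hstep : δ * ((P / Real.sqrt N) * (N / δ))
                  = (δ / δ) * (P * (N / Real.sqrt N)) := by ring
              rw [hstep, div_self (ne_of_gt hδ0), one_mul]
            rw [hval, Real.div_sqrt] at hmm2
            nlinarith
        calc μ x * P * 1 = μ x * P := mul_one _
          _ ≤ μ x * (δ * G x y) := mul_le_mul_of_nonneg_left hPG (hμ0 x)
          _ = μ x * P * 0 + δ * (μ x * G x y) := by ring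
      · simp only [hA, if_false]
        simpa using hδG
  rw [ge_iff_le, sub_le_iff_le_add]
  have hsum1 : (∑ x, ∑ y : Fin H → V, μ x * seqProb πD x y *
      (if Real.log (N / δ) ≤ ∑ h : Fin H, stepHellingerSq πD π x (prefixOf y h) then 1 else 0))
      ≤ ∑ x, ∑ y : Fin H → V, (μ x * seqProb πD x y *
        (if N ≤ seqProb πD x y / seqProb π x y then 1 else 0) + δ * (μ x * G x y)) :=
    Finset.sum_le_sum (fun x _ => Finset.sum_le_sum (fun y _ => hpt x y))
  have hsplit : (∑ x, ∑ y : Fin H → V, (μ x * seqProb πD x y *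
        (if N ≤ seqProb πD x y / seqProb π x y then 1 else 0) + δ * (μ x * G x y)))
      = (∑ x, ∑ y : Fin H → V, μ x * seqProb πD x y *
        (if N ≤ seqProb πD x y / seqProb π x y then 1 else 0))
        + ∑ x, ∑ y : Fin H → V, δ * (μ x * G x y) := by
    rw [← Finset.sum_add_distrib]
    exact Finset.sum_congr rfl (fun x _ => Finset.sum_add_distrib)
  have hδsum : (∑ x, ∑ y : Fin H → V, δ * (μ x * G x y)) ≤ δ := by
    have heq : (∑ x, ∑ y : Fin H → V, δ * (μ x * G x y))
        = δ * ∑ x, μ x * ∑ y : Fin H → V, G x y := by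
      rw [Finset.mul_sum]
      refine Finset.sum_congr rfl (fun x _ => ?_)
      rw [Finset.mul_sum, Finset.mul_sum]
    rw [heq]
    have h7 : (∑ x, μ x * ∑ y : Fin H → V, G x y) ≤ ∑ x, μ x := by
      refine Finset.sum_le_sum (fun x _ => ?_)
      calc μ x * ∑ y : Fin H → V, G x y ≤ μ x * 1 :=
            mul_le_mul_of_nonneg_left (hGsum x) (hμ0 x)
        _ = μ x := mul_one _
    rw [hμ1] at h7
    nlinarith
  linarith
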